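/- arXiv:0806.2952 — 3 statements merged into one kernel-verified Lean document; each statement's English description precedes it below -/
import Mathlib

section
/- Let F : ℝ → ℝ be C², F ≥ 0, F(-1) = F(1) = 0, and set f = F'. Suppose u : ℝ → ℝ is a bounded C² solution of u''(ξ) - (n-1)u'(ξ) - f(u(ξ)) = 0 on all of ℝ with n > 1, such that u(ξ) → -1 as ξ → -∞, u(ξ) → +1 as ξ → +∞, and u'(ξ) → 0 as ξ → ±∞. Then u' ≡ 0, a contradiction; hence no such solution exists. -/
/-!
Multiplying the equation by `u'` shows that the energy `E = (u')² / 2 - F(u)` satisfies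
`E' = (n - 1) (u')² ≥ 0`. Both ends of the orbit sit at zeros of `F` with `u' → 0`, so `E` tends
to `0` at `±∞`; being monotone, `E` vanishes identically. Hence `(n - 1) (u')² = E' = 0`, so `u`
is constant, which is incompatible with the distinct limits `-1` and `1`.
-/

open Filter Topology

noncomputable def energy (F u : ℝ → ℝ) (ξ : ℝ) : ℝ := deriv u ξ ^ 2 / 2 - F (u ξ)

theorem hasDerivAt_energy {F u : ℝ → ℝ} {c ξ : ℝ} (hu : DifferentiableAt ℝ u ξ)
    (hu' : DifferentiableAt ℝ (deriv u) ξ) (hF : DifferentiableAt ℝ F (u ξ))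
    (hode : deriv (deriv u) ξ - c * deriv u ξ - deriv F (u ξ) = 0) :
    HasDerivAt (energy F u) (c * deriv u ξ ^ 2) ξ := by
  have hkin : HasDerivAt (fun ξ => deriv u ξ ^ 2 / 2) (deriv u ξ * deriv (deriv u) ξ) ξ :=
    (hu'.hasDerivAt.pow 2).div_const 2 |>.congr_deriv (by ring)
  have hpot : HasDerivAt (fun ξ => F (u ξ)) (deriv F (u ξ) * deriv u ξ) ξ :=
    hF.hasDerivAt.comp ξ hu.hasDerivAt
  refine (hkin.sub hpot).congr_deriv ?_
  rw [show deriv (deriv u) ξ = c * deriv u ξ + deriv F (u ξ) by linarith]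
  ring

theorem tendsto_energy {F u : ℝ → ℝ} {l : Filter ℝ} {a : ℝ} (hF : ContinuousAt F a)
    (hu : Tendsto u l (𝓝 a)) (hu' : Tendsto (deriv u) l (𝓝 0)) :
    Tendsto (energy F u) l (𝓝 (-F a)) := by
  have h := ((hu'.pow 2).div_const 2).sub (hF.tendsto.comp hu)
  rwa [zero_pow two_ne_zero, zero_div, zero_sub] at h

theorem Monotone.eq_of_tendsto_atBot_atTop {α β : Type*} [TopologicalSpace α] [PartialOrder α]
    [OrderClosedTopology α] [Preorder β] [IsDirectedOrder β] [IsCodirectedOrder β] {f : β → α}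
    {a : α} (hf : Monotone f) (hbot : Tendsto f atBot (𝓝 a)) (htop : Tendsto f atTop (𝓝 a))
    (x : β) : f x = a :=
  le_antisymm (hf.ge_of_tendsto htop x) (hf.le_of_tendsto hbot x)

theorem eq_of_tendsto_atBot_atTop_of_deriv_eq_zero {f : ℝ → ℝ} {a b : ℝ}
    (hf : Differentiable ℝ f) (hf' : ∀ x, deriv f x = 0) (hbot : Tendsto f atBot (𝓝 a))
    (htop : Tendsto f atTop (𝓝 b)) : a = b := by
  have hconst : f = fun _ => f 0 := funext fun x => is_const_of_deriv_eq_zero hf hf' x 0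
  rw [hconst] at hbot htop
  exact (tendsto_nhds_unique tendsto_const_nhds hbot).symm.trans
    (tendsto_nhds_unique tendsto_const_nhds htop)

theorem no_heteroclinic_between_wells_general (n : ℝ) (hn : 1 < n)
    (F : ℝ → ℝ) (hF : ContDiff ℝ 2 F)
    (hFm : F (-1) = 0) (hFp : F 1 = 0)
    (u : ℝ → ℝ) (hu : ContDiff ℝ 2 u)
    (hode : ∀ ξ, deriv (deriv u) ξ - (n - 1) * deriv u ξ - deriv F (u ξ) = 0)
    (hlimm : Tendsto u atBot (nhds (-1)))
    (hlimp : Tendsto u atTop (nhds 1))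
    (hdlimm : Tendsto (deriv u) atBot (nhds 0))
    (hdlimp : Tendsto (deriv u) atTop (nhds 0)) :
    False := by
  have hu1 : Differentiable ℝ u := hu.differentiable two_ne_zero
  have hu2 : Differentiable ℝ (deriv u) := by
    simpa using hu.differentiable_iteratedDeriv 1 (by norm_num)
  have hE : ∀ ξ, HasDerivAt (energy F u) ((n - 1) * deriv u ξ ^ 2) ξ := fun ξ =>
    hasDerivAt_energy (hu1 ξ) (hu2 ξ) (hF.differentiable two_ne_zero (u ξ)) (hode ξ)
  have hmono : Monotone (energy F u) :=
    monotone_of_hasDerivAt_nonneg hE fun ξ => mul_nonneg (by linarith) (sq_nonneg _)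
  have hE0 : energy F u = fun _ => 0 := funext <| hmono.eq_of_tendsto_atBot_atTop
    (by simpa [hFm] using tendsto_energy hF.continuous.continuousAt hlimm hdlimm)
    (by simpa [hFp] using tendsto_energy hF.continuous.continuousAt hlimp hdlimp)
  have hu'0 : ∀ ξ, deriv u ξ = 0 := fun ξ => by
    have h := (hE ξ).unique (hE0 ▸ hasDerivAt_const ξ 0)
    simpa [(by linarith : n - 1 ≠ 0)] using h
  have := eq_of_tendsto_atBot_atTop_of_deriv_eq_zero hu1 hu'0 hlimm hlimp
  norm_num at this

theorem no_heteroclinic_between_wells (n : ℝ) (hn : 1 < n)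
    (F : ℝ → ℝ) (hF : ContDiff ℝ 2 F) (hFpos : ∀ s, 0 ≤ F s)
    (hFm : F (-1) = 0) (hFp : F 1 = 0)
    (u : ℝ → ℝ) (hu : ContDiff ℝ 2 u)
    (hbd : ∃ M, ∀ ξ, |u ξ| ≤ M)
    (hode : ∀ ξ, deriv (deriv u) ξ - (n - 1) * deriv u ξ - deriv F (u ξ) = 0)
    (hlimm : Tendsto u atBot (nhds (-1)))
    (hlimp : Tendsto u atTop (nhds 1))
    (hdlimm : Tendsto (deriv u) atBot (nhds 0))
    (hdlimp : Tendsto (deriv u) atTop (nhds 0)) :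
    False :=
  no_heteroclinic_between_wells_general n hn F hF hFm hFp u hu hode hlimm hlimp hdlimm hdlimp
end

section
/- Let n ≥ 2 and let f : ℝ → ℝ be continuous with f = F', F ∈ C¹, F ≥ 0, F(-1) = F(1) = 0. Suppose u : [0,∞) → ℝ is a C² solution of u''(r) + (n-1)·coth(r)·u'(r) = f(u(r)) for r > 0, with u'(0) = 0, u bounded, and u(r) → η as r → ∞ where η ∈ {-1, +1}, and u'(r) → 0 as r → ∞. Then u is constant, equal to η. -/
/-!
The energy `E(r) = u'(r)² / 2 - F(u(r))` satisfies `E' = -c u'²` along a solution of the damped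
equation `u'' + c u' = F'(u)`, here with `c(r) = (n - 1) coth r > 0`, so `E` is antitone on
`[0, ∞)`. It starts at `E(0) = -F(u(0)) ≤ 0` and tends to `-F(η) = 0`, hence vanishes
identically; then `E' = 0` forces `u' = 0` on `(0, ∞)`, and `u` equals its limit `η`.
-/

open Filter Real Set Topology

theorem AntitoneOn.eq_of_tendsto_atTop_of_le {α β : Type*} [SemilatticeSup α] [Nonempty α]
    [LinearOrder β] [TopologicalSpace β] [OrderClosedTopology β] {f : α → β} {a : α}
    {l : β} (hf : AntitoneOn f (Ici a)) (hlim : Tendsto f atTop (𝓝 l)) (ha : f a ≤ l) {x : α}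
    (hx : a ≤ x) : f x = l := by
  refine le_antisymm ((hf le_rfl hx hx).trans ha) (le_of_tendsto hlim ?_)
  filter_upwards [eventually_ge_atTop x] with y hy
  exact hf hx (hx.trans hy) hy

theorem eq_of_hasDerivAt_zero_of_tendsto_atTop {f : ℝ → ℝ} {a l : ℝ}
    (hf : ContinuousOn f (Ici a)) (hf' : ∀ x > a, HasDerivAt f 0 x)
    (hlim : Tendsto f atTop (𝓝 l)) {x : ℝ} (hx : a ≤ x) : f x = l := by
  have hf'' : ∀ y ∈ interior (Ici a), HasDerivWithinAt f 0 (interior (Ici a)) y := fun y hy ↦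
    (hf' y (by simpa using hy)).hasDerivWithinAt
  have hmono := monotoneOn_of_hasDerivWithinAt_nonneg (convex_Ici a) hf hf'' fun _ _ ↦ le_rfl
  have hanti := antitoneOn_of_hasDerivWithinAt_nonpos (convex_Ici a) hf hf'' fun _ _ ↦ le_rfl
  refine tendsto_nhds_unique (tendsto_const_nhds.congr' ?_) hlim
  filter_upwards [eventually_ge_atTop x] with y hy
  exact le_antisymm (hmono hx (hx.trans hy) hy) (hanti hx (hx.trans hy) hy)

noncomputable def mechanicalEnergy (F u : ℝ → ℝ) (r : ℝ) : ℝ :=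
  deriv u r ^ 2 / 2 - F (u r)

section MechanicalEnergy

variable {F u : ℝ → ℝ}

theorem mechanicalEnergy_of_deriv_eq_zero {r : ℝ} (h : deriv u r = 0) :
    mechanicalEnergy F u r = -F (u r) := by
  simp [mechanicalEnergy, h]

theorem hasDerivAt_mechanicalEnergy {r : ℝ} (hu : DifferentiableAt ℝ u r)
    (hu' : DifferentiableAt ℝ (deriv u) r) (hF : DifferentiableAt ℝ F (u r)) :
    HasDerivAt (mechanicalEnergy F u) (deriv u r * (deriv (deriv u) r - deriv F (u r))) r := by
  have := ((hu'.hasDerivAt.fun_pow 2).div_const 2).sub (hF.hasDerivAt.comp r hu.hasDerivAt)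
  exact this.congr_deriv (by ring)

theorem hasDerivAt_mechanicalEnergy_of_damped {c r : ℝ} (hu : DifferentiableAt ℝ u r)
    (hu' : DifferentiableAt ℝ (deriv u) r) (hF : DifferentiableAt ℝ F (u r))
    (hode : deriv (deriv u) r + c * deriv u r = deriv F (u r)) :
    HasDerivAt (mechanicalEnergy F u) (-(c * deriv u r ^ 2)) r := by
  convert hasDerivAt_mechanicalEnergy hu hu' hF using 1
  rw [← hode]
  ring

theorem tendsto_mechanicalEnergy_atTop {η : ℝ} (hF : ContinuousAt F η)
    (hlim : Tendsto u atTop (𝓝 η)) (hdlim : Tendsto (deriv u) atTop (𝓝 0)) :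
    Tendsto (mechanicalEnergy F u) atTop (𝓝 (-F η)) := by
  have h := ((hdlim.pow 2).div_const 2).sub (hF.tendsto.comp hlim)
  rwa [zero_pow two_ne_zero, zero_div, zero_sub] at h

theorem antitoneOn_mechanicalEnergy_of_damped {c : ℝ → ℝ} (hu : Differentiable ℝ u)
    (hu' : Differentiable ℝ (deriv u)) (hF : Differentiable ℝ F) (hc : ∀ r > 0, 0 ≤ c r)
    (hode : ∀ r > 0, deriv (deriv u) r + c r * deriv u r = deriv F (u r)) :
    AntitoneOn (mechanicalEnergy F u) (Ici 0) := by
  have hcont : Continuous (mechanicalEnergy F u) := continuous_iff_continuousAt.2 fun r ↦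
    (hasDerivAt_mechanicalEnergy (hu r) (hu' r) (hF _)).continuousAt
  refine antitoneOn_of_hasDerivWithinAt_nonpos (convex_Ici 0) hcont.continuousOn
    (f' := fun r ↦ -(c r * deriv u r ^ 2)) (fun r hr ↦ ?_) fun r hr ↦ ?_
  all_goals rw [interior_Ici] at hr
  · exact (hasDerivAt_mechanicalEnergy_of_damped (hu r) (hu' r) (hF _) (hode r hr))
      |>.hasDerivWithinAt
  · exact neg_nonpos.mpr (mul_nonneg (hc r hr) (sq_nonneg _))

end MechanicalEnergy

theorem eq_limit_of_damped_of_nonneg_potential {F u c : ℝ → ℝ} {η : ℝ}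
    (hc : ∀ r > 0, 0 < c r) (hu : Differentiable ℝ u) (hu' : Differentiable ℝ (deriv u))
    (hF : Differentiable ℝ F) (hFnonneg : ∀ s, 0 ≤ F s) (hFη : F η = 0)
    (hode : ∀ r > 0, deriv (deriv u) r + c r * deriv u r = deriv F (u r))
    (hd0 : deriv u 0 = 0) (hlim : Tendsto u atTop (𝓝 η))
    (hdlim : Tendsto (deriv u) atTop (𝓝 0)) {r : ℝ} (hr : 0 ≤ r) : u r = η := by
  have hanti := antitoneOn_mechanicalEnergy_of_damped hu hu' hF (fun r hr ↦ (hc r hr).le) hode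
  have hE : ∀ r ≥ 0, mechanicalEnergy F u r = 0 := fun r hr ↦
    hanti.eq_of_tendsto_atTop_of_le
      (by simpa [hFη] using tendsto_mechanicalEnergy_atTop (hF η).continuousAt hlim hdlim)
      (by rw [mechanicalEnergy_of_deriv_eq_zero hd0]; linarith [hFnonneg (u 0)]) hr
  have hdu : ∀ r > 0, deriv u r = 0 := fun r hr ↦ by
    have hE' : HasDerivAt (mechanicalEnergy F u) 0 r :=
      (hasDerivAt_const r 0).congr_of_eventuallyEq <| by
        filter_upwards [Ioi_mem_nhds hr] with s hs using hE s hs.le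
    have := (hasDerivAt_mechanicalEnergy_of_damped (hu r) (hu' r) (hF _) (hode r hr)).unique hE'
    simpa [(hc r hr).ne'] using this
  refine eq_of_hasDerivAt_zero_of_tendsto_atTop hu.continuous.continuousOn (fun r hr ↦ ?_) hlim hr
  simpa [hdu r hr] using (hu r).hasDerivAt

theorem radial_solution_tending_to_well_is_constant_general (n : ℝ) (hn : 2 ≤ n)
    (F : ℝ → ℝ) (hF : ContDiff ℝ 1 F) (hFpos : ∀ s, 0 ≤ F s)
    (hFm : F (-1) = 0) (hFp : F 1 = 0)
    (η : ℝ) (hη : η = 1 ∨ η = -1)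
    (u : ℝ → ℝ) (hu : ContDiff ℝ 2 u)
    (hode : ∀ r > 0,
      deriv (deriv u) r + (n - 1) * (Real.cosh r / Real.sinh r) * deriv u r
        = deriv F (u r))
    (hd0 : deriv u 0 = 0)
    (hlim : Tendsto u atTop (nhds η))
    (hdlim : Tendsto (deriv u) atTop (nhds 0)) :
    ∀ r ≥ 0, u r = η := by
  have hcoth : ∀ r > 0, 0 < (n - 1) * (cosh r / sinh r) := fun r hr ↦
    mul_pos (by linarith) (div_pos (cosh_pos r) (sinh_pos_iff.mpr hr))
  have hFη : F η = 0 := by rcases hη with rfl | rfl <;> assumption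
  have hu' : ContDiff ℝ 1 (deriv u) := hu.deriv' (n := 1)
  exact fun r ↦ eq_limit_of_damped_of_nonneg_potential hcoth (hu.differentiable (by simp))
    (hu'.differentiable one_ne_zero) (hF.differentiable one_ne_zero) hFpos hFη hode hd0 hlim hdlim

theorem radial_solution_tending_to_well_is_constant (n : ℝ) (hn : 2 ≤ n)
    (F : ℝ → ℝ) (hF : ContDiff ℝ 1 F) (hFpos : ∀ s, 0 ≤ F s)
    (hFm : F (-1) = 0) (hFp : F 1 = 0)
    (η : ℝ) (hη : η = 1 ∨ η = -1)
    (u : ℝ → ℝ) (hu : ContDiff ℝ 2 u)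
    (hbd : ∃ M, ∀ r, |u r| ≤ M)
    (hode : ∀ r > 0,
      deriv (deriv u) r + (n - 1) * (Real.cosh r / Real.sinh r) * deriv u r
        = deriv F (u r))
    (hd0 : deriv u 0 = 0)
    (hlim : Tendsto u atTop (nhds η))
    (hdlim : Tendsto (deriv u) atTop (nhds 0)) :
    ∀ r ≥ 0, u r = η :=
  radial_solution_tending_to_well_is_constant_general n hn F hF hFpos hFm hFp η hη u hu hode hd0
    hlim hdlim
end

section
/- Let n ≥ 2 and λ ≤ (n-1)²/4 with λ > 0, and let α₋ be the smaller root of α² - (n-1)α + λ = 0. Suppose w : (0,∞) → ℝ is C², bounded, and satisfies the inequality x²w''(x) + (2-n)x w'(x) + λ w(x) ≤ 0 with w ≥ 0 near 0 and near ∞ in the sense that liminf_{x→0} w(x)/x^{α₋} ≥ 0 and liminf_{x→∞} w(x)/x^{α₋} ≥ 0 with w/x^{α₋} bounded. Then w ≥ 0 on (0,∞). -/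
/-!
Since `a` solves `a² - (n - 1) a + λ = 0`, the operator `L w = x² w'' + (2 - n) x w' + λ w` has
divergence form after the substitution `w = x ^ a v`: `L w = x ^ (n - a) (p v')'` with
`p = x ^ (2 a + 2 - n) > 0`. Hence `L w ≤ 0` makes `p v'` nonincreasing, so once `v' > 0` at some
point, `v' > 0` everywhere to its left. If `v (x₀) < 0`, the liminf at `∞` yields a point
`s > x₀` with `v' (s) > 0`; then `v` increases on `(0, x₀]`, contradicting the liminf at `0`.
-/

open Filter Set Topology

section MinimumPrinciple

variable {v v' p : ℝ → ℝ} {c : ℝ}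

theorem deriv_pos_of_le_of_antitoneOn_mul (hp : ∀ x > c, 0 < p x)
    (hanti : AntitoneOn (fun x => p x * v' x) (Ioi c)) {x y : ℝ} (hx : c < x) (hxy : x ≤ y)
    (hy : 0 < v' y) : 0 < v' x :=
  have hflux : 0 < p x * v' x :=
    (mul_pos (hp y (hx.trans_le hxy)) hy).trans_le (hanti hx (hx.trans_le hxy) hxy)
  pos_of_mul_pos_right hflux (hp x hx).le

theorem exists_deriv_pos_of_lt_liminf_atTop (hv : ∀ x > c, HasDerivAt v (v' x) x)
    (hbdd : IsBoundedUnder (· ≥ ·) atTop v) {x₀ : ℝ} (hx₀ : c < x₀)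
    (hlt : v x₀ < liminf v atTop) : ∃ s > x₀, 0 < v' s := by
  obtain ⟨x₁, hx₀x₁, hv₁⟩ :=
    ((eventually_gt_atTop x₀).and (eventually_lt_of_lt_liminf hlt hbdd)).exists
  have hderiv : ∀ x ≥ x₀, HasDerivAt v (v' x) x := fun x hx => hv x (hx₀.trans_le hx)
  obtain ⟨s, hs, hslope⟩ := exists_hasDerivAt_eq_slope v v' hx₀x₁
    (fun x hx => (hderiv x hx.1).continuousAt.continuousWithinAt)
    (fun x hx => hderiv x hx.1.le)
  refine ⟨s, hs.1, ?_⟩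
  rw [hslope]
  exact div_pos (sub_pos.2 hv₁) (sub_pos.2 hx₀x₁)

theorem liminf_nhdsGT_le_of_deriv_nonneg (hv : ∀ x > c, HasDerivAt v (v' x) x)
    (hbdd : IsBoundedUnder (· ≥ ·) (𝓝[>] c) v) {x₀ : ℝ} (hx₀ : c < x₀)
    (hv' : ∀ x ∈ Ioo c x₀, 0 ≤ v' x) : liminf v (𝓝[>] c) ≤ v x₀ := by
  have hmono : MonotoneOn v (Ioc c x₀) := by
    refine monotoneOn_of_hasDerivWithinAt_nonneg (f' := v') (convex_Ioc c x₀)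
      (fun x hx => (hv x hx.1).continuousAt.continuousWithinAt) ?_ ?_
    · rw [interior_Ioc]
      exact fun x hx => (hv x hx.1).hasDerivWithinAt
    · rwa [interior_Ioc]
  refine liminf_le_of_frequently_le (Eventually.frequently ?_) hbdd
  filter_upwards [Ioo_mem_nhdsGT hx₀] with x hx
  exact hmono (Ioo_subset_Ioc_self hx) ⟨hx₀, le_rfl⟩ hx.2.le

theorem nonneg_of_antitoneOn_mul_deriv (hv : ∀ x > c, HasDerivAt v (v' x) x)
    (hp : ∀ x > c, 0 < p x) (hanti : AntitoneOn (fun x => p x * v' x) (Ioi c))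
    (hbdd : BddBelow (v '' Ioi c)) (h₀ : 0 ≤ liminf v (𝓝[>] c))
    (hinf : 0 ≤ liminf v atTop) : ∀ x > c, 0 ≤ v x := by
  obtain ⟨M, hM⟩ := hbdd
  have hM' : ∀ x > c, M ≤ v x := fun x hx => hM (mem_image_of_mem v hx)
  by_contra! ⟨x₀, hx₀, hneg⟩
  obtain ⟨s, hx₀s, hs⟩ := exists_deriv_pos_of_lt_liminf_atTop hv
    (isBoundedUnder_of_eventually_ge ((eventually_gt_atTop c).mono hM')) hx₀ (hneg.trans_le hinf)
  have hle := liminf_nhdsGT_le_of_deriv_nonneg hv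
    (isBoundedUnder_of_eventually_ge (eventually_mem_nhdsWithin.mono hM')) hx₀
    (fun x hx => (deriv_pos_of_le_of_antitoneOn_mul hp hanti hx.1 (hx.2.trans hx₀s).le hs).le)
  linarith

end MinimumPrinciple

section EulerOperator

variable {w w' : ℝ → ℝ} {a x w₁ : ℝ}

theorem hasDerivAt_div_rpow (hx : 0 < x) (hw : HasDerivAt w w₁ x) :
    HasDerivAt (fun y => w y / y ^ a) ((x * w₁ - a * w x) / x ^ (a + 1)) x := by
  have hxa : x ^ a ≠ 0 := (Real.rpow_pos_of_pos hx a).ne'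
  refine (hw.div (Real.hasDerivAt_rpow_const (p := a) (Or.inl hx.ne')) hxa).congr_deriv ?_
  rw [Real.rpow_add hx, Real.rpow_sub_one hx.ne', Real.rpow_one]
  field_simp

theorem hasDerivAt_rpow_mul_flux {n lam w₂ : ℝ} (hx : 0 < x)
    (hroot : a ^ 2 - (n - 1) * a + lam = 0) (hw : HasDerivAt w (w' x) x)
    (hw' : HasDerivAt w' w₂ x) :
    HasDerivAt (fun y => y ^ (a + 1 - n) * (y * w' y - a * w y))
      (x ^ (a - n) * (x ^ 2 * w₂ + (2 - n) * x * w' x + lam * w x)) x := by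
  have hflux : HasDerivAt (fun y => y * w' y - a * w y) (1 * w' x + x * w₂ - a * w' x) x :=
    ((hasDerivAt_id x).mul hw').sub (hw.const_mul a)
  refine ((Real.hasDerivAt_rpow_const (p := a + 1 - n) (Or.inl hx.ne')).mul hflux).congr_deriv ?_
  rw [show a + 1 - n - 1 = a - n by ring, show a + 1 - n = a - n + 1 by ring,
    Real.rpow_add_one hx.ne']
  linear_combination -(x ^ (a - n) * w x) * hroot

theorem antitoneOn_rpow_mul_flux {n lam : ℝ} {w'' : ℝ → ℝ}
    (hroot : a ^ 2 - (n - 1) * a + lam = 0) (hw : ∀ x > 0, HasDerivAt w (w' x) x)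
    (hw' : ∀ x > 0, HasDerivAt w' (w'' x) x)
    (hineq : ∀ x > 0, x ^ 2 * w'' x + (2 - n) * x * w' x + lam * w x ≤ 0) :
    AntitoneOn (fun x => x ^ (a + 1 - n) * (x * w' x - a * w x)) (Ioi 0) := by
  have hflux := fun x (hx : 0 < x) => hasDerivAt_rpow_mul_flux hx hroot (hw x hx) (hw' x hx)
  refine antitoneOn_of_hasDerivWithinAt_nonpos (convex_Ioi 0) (f' := fun x =>
      x ^ (a - n) * (x ^ 2 * w'' x + (2 - n) * x * w' x + lam * w x))
    (fun x hx => (hflux x hx).continuousAt.continuousWithinAt) ?_ ?_ <;> rw [interior_Ioi]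
  · exact fun x hx => (hflux x hx).hasDerivWithinAt
  · exact fun x hx => mul_nonpos_of_nonneg_of_nonpos (Real.rpow_nonneg hx.le _) (hineq x hx)

end EulerOperator

theorem parabolic_minimum_principle_general (n : ℝ)
    (lam : ℝ)
    (a : ℝ) (hroot : a ^ 2 - (n - 1) * a + lam = 0)
    (w : ℝ → ℝ) (hw : ContDiffOn ℝ 2 w (Set.Ioi 0))
    (hineq : ∀ x > 0,
      x ^ 2 * deriv (deriv w) x + (2 - n) * x * deriv w x + lam * w x ≤ 0)
    (hquot : ∃ M, ∀ x > 0, |w x / x ^ a| ≤ M)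
    (h0 : 0 ≤ Filter.liminf (fun x => w x / x ^ a) (nhdsWithin 0 (Set.Ioi 0)))
    (hinfty : 0 ≤ Filter.liminf (fun x => w x / x ^ a) atTop) :
    ∀ x > 0, 0 ≤ w x := by
  have hw' : ∀ x > 0, HasDerivAt w (deriv w x) x := fun x hx =>
    ((hw.contDiffAt (Ioi_mem_nhds hx)).differentiableAt (by norm_num)).hasDerivAt
  have hw'' : ∀ x > 0, HasDerivAt (deriv w) (deriv (deriv w) x) x := fun x hx =>
    (((hw.deriv_of_isOpen isOpen_Ioi (m := 1) (by norm_num)).contDiffAt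
      (Ioi_mem_nhds hx)).differentiableAt (by norm_num)).hasDerivAt
  have hflux := antitoneOn_rpow_mul_flux hroot hw' hw'' hineq
  have hv : ∀ x > 0, HasDerivAt (fun y => w y / y ^ a)
      ((x * deriv w x - a * w x) / x ^ (a + 1)) x :=
    fun x hx => hasDerivAt_div_rpow hx (hw' x hx)
  have hweighted : AntitoneOn (fun x => x ^ (a + 1 - n) * x ^ (a + 1) *
      ((x * deriv w x - a * w x) / x ^ (a + 1))) (Ioi 0) := by
    refine (EqOn.congr_antitoneOn fun x (hx : 0 < x) => ?_).mp hflux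
    field_simp [(Real.rpow_pos_of_pos hx (a + 1)).ne']
  obtain ⟨M, hM⟩ := hquot
  have hv_nonneg := nonneg_of_antitoneOn_mul_deriv hv (fun x hx => by positivity) hweighted
    ⟨-M, by rintro _ ⟨x, hx, rfl⟩; exact (abs_le.mp (hM x hx)).1⟩ h0 hinfty
  intro x hx
  simpa using (le_div_iff₀ (Real.rpow_pos_of_pos hx a)).1 (hv_nonneg x hx)

theorem parabolic_minimum_principle (n : ℝ) (hn : 2 ≤ n)
    (lam : ℝ) (hlam : 0 < lam) (hlam' : lam ≤ (n - 1) ^ 2 / 4)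
    (a : ℝ) (hroot : a ^ 2 - (n - 1) * a + lam = 0) (hsmall : a ≤ (n - 1) / 2)
    (w : ℝ → ℝ) (hw : ContDiffOn ℝ 2 w (Set.Ioi 0))
    (hwb : ∃ M, ∀ x > 0, |w x| ≤ M)
    (hineq : ∀ x > 0,
      x ^ 2 * deriv (deriv w) x + (2 - n) * x * deriv w x + lam * w x ≤ 0)
    (hquot : ∃ M, ∀ x > 0, |w x / x ^ a| ≤ M)
    (h0 : 0 ≤ Filter.liminf (fun x => w x / x ^ a) (nhdsWithin 0 (Set.Ioi 0)))
    (hinfty : 0 ≤ Filter.liminf (fun x => w x / x ^ a) atTop) :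
    ∀ x > 0, 0 ≤ w x :=
  parabolic_minimum_principle_general n lam a hroot w hw hineq hquot h0 hinfty
end
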